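/- The weighted Jaccard distance 1 − WJ(u,v) satisfies the triangle inequality on vectors with nonnegative entries: 1 − WJ(u,w) ≤ (1 − WJ(u,v)) + (1 − WJ(v,w)). -/
import Mathlib


open Finset

/-- Weighted Jaccard similarity. -/
noncomputable def wJ {D : ℕ} (u v : Fin D → ℝ) : ℝ :=
  (∑ i, min (u i) (v i)) / (∑ i, max (u i) (v i))

/-- Steinhaus-type inequality for real numbers. -/
lemma steinhaus_aux (a b c A B C : ℝ) (hA : 0 ≤ A) (hB : 0 ≤ B) (hC : 0 ≤ C)
    (ha : 0 ≤ a) (hc : 0 ≤ c)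
    (hCAB : C ≤ A + B) (h1 : b ≤ a + A) (h2 : b ≤ c + B)
    (d1 : 0 < a + b + A) (d2 : 0 < b + c + B) (d3 : 0 < a + c + C) :
    2*C/(a+c+C) ≤ 2*A/(a+b+A) + 2*B/(b+c+B) := by
  have d4 : 0 < a + c + (A + B) := lt_of_lt_of_le d3 (by linarith)
  have s1 : 2*C/(a+c+C) ≤ (2*A+2*B)/(a+c+(A+B)) := by
    rw [div_le_div_iff₀ d3 d4]
    nlinarith [mul_nonneg (add_nonneg ha hc) (sub_nonneg.2 hCAB)]
  have s2 : 2*A/(a+c+(A+B)) ≤ 2*A/(a+b+A) := by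
    apply div_le_div_of_nonneg_left (by linarith) d1 (by linarith)
  have s3 : 2*B/(a+c+(A+B)) ≤ 2*B/(b+c+B) := by
    apply div_le_div_of_nonneg_left (by linarith) d2 (by linarith)
  have : (2*A+2*B)/(a+c+(A+B)) = 2*A/(a+c+(A+B)) + 2*B/(a+c+(A+B)) := add_div _ _ _
  linarith

lemma sum_max_min {D : ℕ} (u v : Fin D → ℝ) :
    2 * (∑ i, max (u i) (v i)) = (∑ i, u i) + (∑ i, v i) + (∑ i, |u i - v i|) ∧
    2 * (∑ i, min (u i) (v i)) = (∑ i, u i) + (∑ i, v i) - (∑ i, |u i - v i|) := by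
  constructor
  · rw [Finset.mul_sum, ← Finset.sum_add_distrib, ← Finset.sum_add_distrib]
    apply Finset.sum_congr rfl
    intro i _
    rcases le_total (u i) (v i) with h | h
    · rw [max_eq_right h, abs_of_nonpos (by linarith)]; ring
    · rw [max_eq_left h, abs_of_nonneg (by linarith)]; ring
  · rw [Finset.mul_sum, ← Finset.sum_add_distrib, ← Finset.sum_sub_distrib]
    apply Finset.sum_congr rfl
    intro i _
    rcases le_total (u i) (v i) with h | h
    · rw [min_eq_left h, abs_of_nonpos (by linarith)]; ring
    · rw [min_eq_right h, abs_of_nonneg (by linarith)]; ring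

/-- The weighted Jaccard distance `1 − WJ` satisfies the triangle inequality
on vectors with nonnegative entries (all pairwise denominators positive). -/
theorem weighted_jaccard_distance_triangle
    {D : ℕ} (u v w : Fin D → ℝ)
    (hu : ∀ i, 0 ≤ u i) (hv : ∀ i, 0 ≤ v i) (hw : ∀ i, 0 ≤ w i)
    (huv : 0 < ∑ i, max (u i) (v i))
    (hvw : 0 < ∑ i, max (v i) (w i))
    (huw : 0 < ∑ i, max (u i) (w i)) :
    1 - wJ u w ≤ (1 - wJ u v) + (1 - wJ v w) := by
  set a := ∑ i, u i with ha
  set b := ∑ i, v i with hb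
  set c := ∑ i, w i with hc
  set A := ∑ i, |u i - v i| with hAdef
  set B := ∑ i, |v i - w i| with hBdef
  set C := ∑ i, |u i - w i| with hCdef
  obtain ⟨hM1, hm1⟩ := sum_max_min u v
  obtain ⟨hM2, hm2⟩ := sum_max_min v w
  obtain ⟨hM3, hm3⟩ := sum_max_min u w
  have hA : 0 ≤ A := Finset.sum_nonneg fun i _ => abs_nonneg _
  have hB : 0 ≤ B := Finset.sum_nonneg fun i _ => abs_nonneg _
  have hC : 0 ≤ C := Finset.sum_nonneg fun i _ => abs_nonneg _
  have ha0 : 0 ≤ a := Finset.sum_nonneg fun i _ => hu i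
  have hc0 : 0 ≤ c := Finset.sum_nonneg fun i _ => hw i
  have hCAB : C ≤ A + B := by
    rw [hAdef, hBdef, hCdef, ← Finset.sum_add_distrib]
    exact Finset.sum_le_sum fun i _ => by
      calc |u i - w i| = |(u i - v i) + (v i - w i)| := by ring_nf
        _ ≤ |u i - v i| + |v i - w i| := abs_add_le _ _
  have h1 : b ≤ a + A := by
    rw [hb, ha, hAdef, ← Finset.sum_add_distrib]
    exact Finset.sum_le_sum fun i _ => by
      have := abs_nonneg (u i - v i); have := le_abs_self (v i - u i)
      have : v i - u i ≤ |u i - v i| := by rw [abs_sub_comm]; exact le_abs_self _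
      linarith
  have h2 : b ≤ c + B := by
    rw [hb, hc, hBdef, ← Finset.sum_add_distrib]
    exact Finset.sum_le_sum fun i _ => by
      have : v i - w i ≤ |v i - w i| := le_abs_self _
      linarith
  have e1 : 1 - wJ u v = 2*A/(a+b+A) := by
    rw [wJ, hM1.symm, mul_div_mul_left _ _ (two_ne_zero)]
    field_simp
    linarith
  have e2 : 1 - wJ v w = 2*B/(b+c+B) := by
    rw [wJ, hM2.symm, mul_div_mul_left _ _ (two_ne_zero)]
    field_simp
    linarith
  have e3 : 1 - wJ u w = 2*C/(a+c+C) := by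
    rw [wJ, hM3.symm, mul_div_mul_left _ _ (two_ne_zero)]
    field_simp
    linarith
  rw [e1, e2, e3]
  exact steinhaus_aux a b c A B C hA hB hC ha0 hc0 hCAB h1 h2
    (by linarith) (by linarith) (by linarith)
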